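/- arXiv:1805.02748 — 2 statements merged into one kernel-verified Lean document; each statement's English description precedes it below -/
import Mathlib

section
/- Fix k, l < ω and ordinals ε_0 ≥ … ≥ ε_l, let P be a tree with rank(P) = ω^{ω^{ε_0}}·…·ω^{ω^{ε_l}}, and let f : Λ_2(P) → {0,…,k} be a function. Suppose Q is a subtree of P with rank(Q) = rank(P) and F : {0,…,l} → {0,…,k} is a function such that for every (s,t) ∈ Λ_2(Q) one has ς_Q(s,t) = ς_P(s,t) and F(ς_Q(s,t)) = f(s,t). Then for every j ≤ k, setting A = {i ≤ l : F(i) = j} and α = ω^{ω^{ε_0}·1_A(0)}·…·ω^{ω^{ε_l}·1_A(l)} (with α = 1 if A = ∅), there exists a subtree R of P with rank(R) = α such that f(s,t) = j for all (s,t) ∈ Λ_2(R). -/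
open Ordinal Set

universe u

/-- The set of maximal elements ("leaves") of `P`. -/
def treeLeaves {α : Type u} [PartialOrder α] (P : Set α) : Set α :=
  {t ∈ P | ∀ s ∈ P, ¬ t < s}

/-- The derivative `P' = P \ Leaves P`. -/
def treeDeriv {α : Type u} [PartialOrder α] (P : Set α) : Set α :=
  P \ treeLeaves P

/-- The transfinite iterated derivative `P^ξ`. -/
noncomputable def derivIter {α : Type u} [PartialOrder α] (P : Set α) (ξ : Ordinal.{u}) :
    Set α :=
  Ordinal.limitRecOn ξ P (fun _ ih => treeDeriv ih)
    (fun o _ ih => ⋂ (ζ : Set.Iio o), ih ζ.1 ζ.2)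

/-- `P` is a tree: every ancestor set is well-ordered (a well-founded chain). -/
def IsTree {α : Type u} [PartialOrder α] (P : Set α) : Prop :=
  ∀ t ∈ P, IsChain (· ≤ ·) {s ∈ P | s ≤ t} ∧ {s ∈ P | s ≤ t}.WellFoundedOn (· < ·)

/-- `P` is well-founded: some transfinite derivative is empty. -/
def IsWFTree {α : Type u} [PartialOrder α] (P : Set α) : Prop :=
  ∃ ξ : Ordinal.{u}, derivIter P ξ = ∅

/-- The rank of a well-founded tree: the least `ξ` with `P^ξ = ∅`. -/
noncomputable def treeRank {α : Type u} [PartialOrder α] (P : Set α) : Ordinal.{u} :=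
  sInf {ξ | derivIter P ξ = ∅}

/-- `τ_P(t)`: the largest ordinal `ξ` with `t ∈ P^ξ`. -/
noncomputable def treeTau {α : Type u} [PartialOrder α] (P : Set α) (t : α) : Ordinal.{u} :=
  sSup {ξ | t ∈ derivIter P ξ}

/-- `τ_{P,β}(t)`: the largest ordinal `ξ` with `t ∈ P^{β·ξ}`. -/
noncomputable def treeTauMul {α : Type u} [PartialOrder α] (P : Set α) (β : Ordinal.{u})
    (t : α) : Ordinal.{u} :=
  sSup {ξ | t ∈ derivIter P (β * ξ)}

/-- `alpProd ε i = ω^{ω^{ε 0}} · ⋯ · ω^{ω^{ε i}}`. -/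
noncomputable def alpProd (ε : ℕ → Ordinal.{u}) : ℕ → Ordinal.{u}
  | 0 => omega0 ^ omega0 ^ ε 0
  | (i + 1) => alpProd ε i * omega0 ^ omega0 ^ ε (i + 1)

/-- The separation function `ς_P` of a tree whose rank has decomposition
`ω^{ω^{ε 0}} ⋯ ω^{ω^{ε l}}`: the least `i` such that `s, t` lie in the same block
`P^{α_i·δ} \ P^{α_i·(δ+1)}` for some ordinal `δ`. -/
noncomputable def sep {α : Type u} [PartialOrder α] (P : Set α) (ε : ℕ → Ordinal.{u})
    (s t : α) : ℕ :=
  sInf {i : ℕ | ∃ δ : Ordinal.{u},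
    s ∈ derivIter P (alpProd ε i * δ) \ derivIter P (alpProd ε i * (δ + 1)) ∧
    t ∈ derivIter P (alpProd ε i * δ) \ derivIter P (alpProd ε i * (δ + 1))}

/-- `indProd ε A l = ω^{ω^{ε 0}·1_A(0)} ⋯ ω^{ω^{ε l}·1_A(l)}`. -/
noncomputable def indProd (ε : ℕ → Ordinal.{u}) (A : Set ℕ) : ℕ → Ordinal.{u}
  | 0 => omega0 ^ (omega0 ^ ε 0 * A.indicator (fun _ => (1 : Ordinal.{u})) 0)
  | (i + 1) => indProd ε A i *
      omega0 ^ (omega0 ^ ε (i + 1) * A.indicator (fun _ => (1 : Ordinal.{u})) (i + 1))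

/-- `sumPow ε i = ω^{ε 0} + ⋯ + ω^{ε (i-1)}` (the partial sums `γ_i`). -/
noncomputable def sumPow (ε : ℕ → Ordinal.{u}) : ℕ → Ordinal.{u}
  | 0 => 0
  | (i + 1) => sumPow ε i + omega0 ^ ε i

/-- `indSum ε A i = Σ_{n < i} 1_A(n)·ω^{ε n}`. -/
noncomputable def indSum (ε : ℕ → Ordinal.{u}) (A : Set ℕ) : ℕ → Ordinal.{u}
  | 0 => 0
  | (i + 1) => indSum ε A i + A.indicator (fun _ => (1 : Ordinal.{u})) i * omega0 ^ ε i

/-!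
The subtree `Q` has rank `γ = α_l`, and every level `ζ < γ` of `Q` is attained above any node of
larger level. Write ordinals below `γ` in the mixed radix of the factors `ω^{ω^{ε_i}}`, and
ordinals below `α` in the mixed radix of the factors `ω^{ω^{ε_i}·1_A(i)}`. Reading the digits of
the second kind as digits of the first kind is a strictly increasing map `e : α → γ` that
respects the blocks of every radix position, so the nodes of `Q` whose level lies in the range
of `e` form a subtree `R` of rank `α`. For `s < t` in `R`, `ς_Q(s, t)` is the least position from
which the digits of the `e`-preimages of their levels agree. The factor at that position is not
`1`, since otherwise the digits would already agree one position lower; hence it lies in `A`, and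
`f(s, t) = F(ς_Q(s, t)) = j`.
-/

open Order

section Derivatives

variable {α : Type u} [PartialOrder α] {Q : Set α} {s t : α}

@[simp] theorem derivIter_zero (Q : Set α) : derivIter Q 0 = Q :=
  limitRecOn_zero _ _ _

theorem derivIter_add_one (Q : Set α) (ξ : Ordinal.{u}) :
    derivIter Q (ξ + 1) = treeDeriv (derivIter Q ξ) :=
  limitRecOn_add_one _ _ _ _

theorem derivIter_limit (Q : Set α) {o : Ordinal.{u}} (ho : IsSuccLimit o) :
    derivIter Q o = ⋂ ζ : Iio o, derivIter Q ζ :=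
  limitRecOn_limit _ _ _ _ ho

theorem mem_treeDeriv_iff {X : Set α} : t ∈ treeDeriv X ↔ t ∈ X ∧ ∃ s ∈ X, t < s := by
  simp [treeDeriv, treeLeaves]

theorem mem_derivIter_add_one_iff {ξ : Ordinal.{u}} :
    t ∈ derivIter Q (ξ + 1) ↔ t ∈ derivIter Q ξ ∧ ∃ s ∈ derivIter Q ξ, t < s := by
  rw [derivIter_add_one, mem_treeDeriv_iff]

theorem derivIter_antitone (Q : Set α) : Antitone (derivIter Q) := by
  intro ζ ξ h
  induction ξ using limitRecOn with
  | zero => rw [nonpos_iff_eq_zero.1 h]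
  | add_one b ih =>
    rcases h.eq_or_lt with rfl | h
    · rfl
    · exact fun t ht => ih (lt_add_one_iff.1 h) (mem_derivIter_add_one_iff.1 ht).1
  | limit o ho _ =>
    rcases h.eq_or_lt with rfl | h
    · rfl
    · rw [derivIter_limit Q ho]
      exact iInter_subset_of_subset ⟨ζ, h⟩ subset_rfl

theorem derivIter_subset (Q : Set α) (ξ : Ordinal.{u}) : derivIter Q ξ ⊆ Q := by
  simpa using derivIter_antitone Q (zero_le : 0 ≤ ξ)

theorem mem_derivIter_of_lt (hs : s ∈ Q) (hst : s < t) {ξ : Ordinal.{u}}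
    (ht : t ∈ derivIter Q ξ) : s ∈ derivIter Q ξ := by
  induction ξ using limitRecOn with
  | zero => simpa using hs
  | add_one b ih =>
    rw [mem_derivIter_add_one_iff] at ht ⊢
    exact ⟨ih ht.1, t, ht.1, hst⟩
  | limit o ho ih =>
    rw [derivIter_limit Q ho, mem_iInter] at ht ⊢
    exact fun ζ => ih ζ ζ.2 (ht ζ)

end Derivatives

section Rank

variable {α : Type u} [PartialOrder α] {Q : Set α}

theorem isWFTree_of_treeRank_ne_zero (h : treeRank Q ≠ 0) : IsWFTree Q := by
  by_contra hwf
  have : {ξ | derivIter Q ξ = ∅} = ∅ := eq_empty_of_forall_notMem fun ξ hξ => hwf ⟨ξ, hξ⟩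
  exact h (by rw [treeRank, this, Ordinal.sInf_empty])

theorem nonempty_derivIter_of_lt_treeRank {ξ : Ordinal.{u}} (h : ξ < treeRank Q) :
    (derivIter Q ξ).Nonempty :=
  nonempty_iff_ne_empty.2 (notMem_of_lt_csInf' (s := {ξ | derivIter Q ξ = ∅}) h)

theorem treeRank_eq {a : Ordinal.{u}} (h : derivIter Q a = ∅)
    (hne : ∀ ξ < a, (derivIter Q ξ).Nonempty) : treeRank Q = a :=
  (csInf_le' (s := {ξ | derivIter Q ξ = ∅}) h).antisymm <| le_csInf ⟨a, h⟩ fun _ hb =>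
    not_lt.1 fun hba => (hne _ hba).ne_empty hb

end Rank

section Levels

variable {α : Type u} [PartialOrder α] {Q : Set α} {s t : α}

theorem bddAbove_levels (hwf : IsWFTree Q) (t : α) : BddAbove {ξ | t ∈ derivIter Q ξ} := by
  obtain ⟨ξ₀, h₀⟩ := hwf
  exact ⟨ξ₀, fun ξ hξ => le_of_not_gt fun h => by simpa [h₀] using derivIter_antitone Q h.le hξ⟩

theorem mem_derivIter_treeTau (hwf : IsWFTree Q) (ht : t ∈ Q) :
    t ∈ derivIter Q (treeTau Q t) := by
  have hbdd := bddAbove_levels hwf t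
  have hne : {ξ | t ∈ derivIter Q ξ}.Nonempty := ⟨0, by simpa using ht⟩
  rcases zero_or_succ_or_isSuccLimit (treeTau Q t) with h | ⟨a, h⟩ | h
  · simpa [h] using ht
  · by_contra hc
    have hle : treeTau Q t ≤ a := csSup_le hne fun ξ hξ =>
      lt_succ_iff.1 <| h ▸ (le_csSup hbdd hξ).lt_of_ne fun e => hc (by rwa [treeTau, ← e])
    exact (h ▸ lt_succ a).not_ge hle
  · rw [derivIter_limit Q h, mem_iInter]
    intro ζ
    obtain ⟨ξ, hξ, hζξ⟩ := (lt_csSup_iff hbdd hne).1 ζ.2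
    exact derivIter_antitone Q hζξ.le hξ

theorem mem_derivIter_iff_le_treeTau (hwf : IsWFTree Q) (ht : t ∈ Q) {ξ : Ordinal.{u}} :
    t ∈ derivIter Q ξ ↔ ξ ≤ treeTau Q t :=
  ⟨fun h => le_csSup (bddAbove_levels hwf t) h,
    fun h => derivIter_antitone Q h (mem_derivIter_treeTau hwf ht)⟩

theorem treeTau_lt_treeTau (hwf : IsWFTree Q) (hs : s ∈ Q) (ht : t ∈ Q) (hst : s < t) :
    treeTau Q t < treeTau Q s := by
  have htτ := mem_derivIter_treeTau hwf ht
  have hsτ : s ∈ derivIter Q (treeTau Q t + 1) :=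
    mem_derivIter_add_one_iff.2 ⟨mem_derivIter_of_lt hs hst htτ, t, htτ, hst⟩
  exact add_one_le_iff.1 ((mem_derivIter_iff_le_treeTau hwf hs).1 hsτ)

theorem exists_gt_treeTau_eq (hwf : IsWFTree Q) (ht : t ∈ Q) {ζ : Ordinal.{u}}
    (hζ : ζ < treeTau Q t) : ∃ s ∈ Q, t < s ∧ treeTau Q s = ζ := by
  induction t using (InvImage.wf (treeTau Q) wellFounded_lt).induction with
  | _ t ih =>
    obtain ⟨-, s, hs, hts⟩ := mem_derivIter_add_one_iff.1 <|
      (mem_derivIter_iff_le_treeTau hwf ht).2 (add_one_le_iff.2 hζ)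
    have hsQ := derivIter_subset Q ζ hs
    rcases ((mem_derivIter_iff_le_treeTau hwf hsQ).1 hs).eq_or_lt with h | h
    · exact ⟨s, hsQ, hts, h.symm⟩
    · obtain ⟨s', hs'Q, hss', hs'⟩ := ih s (treeTau_lt_treeTau hwf ht hsQ hts) hsQ h
      exact ⟨s', hs'Q, hts.trans hss', hs'⟩

theorem exists_treeTau_eq (hwf : IsWFTree Q) {ζ : Ordinal.{u}} (hζ : ζ < treeRank Q) :
    ∃ t ∈ Q, treeTau Q t = ζ := by
  obtain ⟨t, ht⟩ := nonempty_derivIter_of_lt_treeRank hζ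
  have htQ := derivIter_subset Q ζ ht
  rcases ((mem_derivIter_iff_le_treeTau hwf htQ).1 ht).eq_or_lt with h | h
  · exact ⟨t, htQ, h.symm⟩
  · obtain ⟨s, hsQ, -, hs⟩ := exists_gt_treeTau_eq hwf htQ h
    exact ⟨s, hsQ, hs⟩

theorem mem_block_iff (hwf : IsWFTree Q) (ht : t ∈ Q) {β : Ordinal.{u}} (hβ : β ≠ 0)
    (δ : Ordinal.{u}) :
    t ∈ derivIter Q (β * δ) \ derivIter Q (β * (δ + 1)) ↔ treeTau Q t / β = δ := by
  rw [mem_sdiff, mem_derivIter_iff_le_treeTau hwf ht, mem_derivIter_iff_le_treeTau hwf ht,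
    not_le, div_eq_iff hβ]

end Levels

section LevelSubtree

variable {α : Type u} [PartialOrder α] {Q : Set α}

def levelSubtree (Q : Set α) (h : Ordinal.{u} → Ordinal.{u}) (a : Ordinal.{u}) : Set α :=
  {t ∈ Q | ∃ μ < a, treeTau Q t = h μ}

variable {h : Ordinal.{u} → Ordinal.{u}} {a : Ordinal.{u}}

theorem mem_derivIter_levelSubtree (hwf : IsWFTree Q) (hh : StrictMonoOn h (Iio a))
    (ξ : Ordinal.{u}) {t : α} :
    t ∈ derivIter (levelSubtree Q h a) ξ ↔ t ∈ Q ∧ ∃ μ < a, ξ ≤ μ ∧ treeTau Q t = h μ := by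
  induction ξ using limitRecOn generalizing t with
  | zero => simp [levelSubtree]
  | add_one b ih =>
    simp only [mem_derivIter_add_one_iff, ih, add_one_le_iff]
    constructor
    · rintro ⟨⟨htQ, μ, hμ, -, htμ⟩, s, ⟨hsQ, ν, hν, hbν, hsν⟩, hts⟩
      have hνμ : h ν < h μ := hsν ▸ htμ ▸ treeTau_lt_treeTau hwf htQ hsQ hts
      exact ⟨htQ, μ, hμ, hbν.trans_lt ((hh.lt_iff_lt hν hμ).1 hνμ), htμ⟩
    · rintro ⟨htQ, μ, hμ, hbμ, htμ⟩
      obtain ⟨s, hsQ, hts, hsb⟩ :=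
        exists_gt_treeTau_eq hwf htQ (htμ ▸ hh (hbμ.trans hμ) hμ hbμ)
      exact ⟨⟨htQ, μ, hμ, hbμ.le, htμ⟩, s, ⟨hsQ, b, hbμ.trans hμ, le_rfl, hsb⟩, hts⟩
  | limit o ho ih =>
    rw [derivIter_limit _ ho, mem_iInter]
    constructor
    · intro ht
      obtain ⟨htQ, μ, hμ, -, htμ⟩ := (ih 0 ho.bot_lt).1 (ht ⟨0, ho.bot_lt⟩)
      refine ⟨htQ, μ, hμ, le_of_not_gt fun hμo => ?_, htμ⟩
      obtain ⟨-, ν, hν, hμν, htν⟩ := (ih _ (ho.add_one_lt hμo)).1 (ht ⟨_, ho.add_one_lt hμo⟩)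
      obtain rfl := hh.injOn hμ hν (htμ.symm.trans htν)
      exact (lt_add_one μ).not_ge hμν
    · rintro ⟨htQ, μ, hμ, hoμ, htμ⟩ ζ
      exact (ih ζ ζ.2).2 ⟨htQ, μ, hμ, ζ.2.le.trans hoμ, htμ⟩

theorem treeRank_levelSubtree (hwf : IsWFTree Q) (hh : StrictMonoOn h (Iio a))
    (hmaps : MapsTo h (Iio a) (Iio (treeRank Q))) : treeRank (levelSubtree Q h a) = a := by
  refine treeRank_eq (eq_empty_of_forall_notMem fun t ht => ?_) fun ξ hξ => ?_
  · obtain ⟨-, μ, hμ, haμ, -⟩ := (mem_derivIter_levelSubtree hwf hh a).1 ht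
    exact hμ.not_ge haμ
  · obtain ⟨t, htQ, ht⟩ := exists_treeTau_eq hwf (hmaps hξ)
    exact ⟨t, (mem_derivIter_levelSubtree hwf hh ξ).2 ⟨htQ, ξ, hξ, le_rfl, ht⟩⟩

end LevelSubtree

section DigitEmbedding

theorem mul_add_lt_mul_add {ρ q q' x x' : Ordinal.{u}} (hx' : x' < ρ) (hq : q' < q) :
    ρ * q' + x' < ρ * q + x :=
  calc ρ * q' + x' < ρ * (q' + 1) := by rw [mul_add_one]; exact add_lt_add_right hx' _
    _ ≤ ρ * q := by gcongr; exact add_one_le_iff.2 hq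
    _ ≤ ρ * q + x := le_self_add

theorem mul_add_lt_mul_add_iff {ρ q q' x x' : Ordinal.{u}} (hx : x < ρ) (hx' : x' < ρ) :
    ρ * q' + x' < ρ * q + x ↔ q' < q ∨ q' = q ∧ x' < x := by
  refine ⟨fun h => ?_, ?_⟩
  · rcases lt_trichotomy q' q with hq | rfl | hq
    · exact Or.inl hq
    · exact Or.inr ⟨rfl, (add_lt_add_iff_left _).1 h⟩
    · exact absurd h (mul_add_lt_mul_add hx hq).not_gt
  · rintro (hq | ⟨rfl, hx'x⟩)
    · exact mul_add_lt_mul_add hx' hq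
    · exact add_lt_add_right hx'x _

theorem mul_add_eq_mul_add_iff {ρ q q' x x' : Ordinal.{u}} (hx : x < ρ) (hx' : x' < ρ) :
    ρ * q + x = ρ * q' + x' ↔ q = q' ∧ x = x' := by
  have hρ : ρ ≠ 0 := hx.ne_bot
  refine ⟨fun h => ⟨?_, ?_⟩, fun ⟨hq, hx⟩ => hq ▸ hx ▸ rfl⟩
  · simpa [mul_add_div _ hρ, div_eq_zero_of_lt hx, div_eq_zero_of_lt hx'] using
      congrArg (· / ρ) h
  · simpa [mod_eq_of_lt hx, mod_eq_of_lt hx'] using congrArg (· % ρ) h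

variable (c d : ℕ → Ordinal.{u})

noncomputable def ordProd : ℕ → Ordinal.{u}
  | 0 => c 0
  | i + 1 => ordProd i * c (i + 1)

/-- Reads the mixed-radix digits of `ν` with respect to the factors `d` as digits with respect to
the factors `c`. -/
noncomputable def digitEmb : ℕ → Ordinal.{u} → Ordinal.{u}
  | 0, ν => ν
  | i + 1, ν => ordProd c i * (ν / ordProd d i) + digitEmb i (ν % ordProd d i)

variable {c d}

theorem ordProd_ne_zero (hc : ∀ i, c i ≠ 0) : ∀ i, ordProd c i ≠ 0
  | 0 => hc 0
  | i + 1 => mul_ne_zero (ordProd_ne_zero hc i) (hc (i + 1))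

theorem ordProd_dvd_ordProd {m i : ℕ} (h : m ≤ i) : ordProd c m ∣ ordProd c i := by
  induction i, h using Nat.le_induction with
  | base => rfl
  | succ i _ ih => exact dvd_mul_of_dvd_left ih _

theorem digitEmb_lt (hd : ∀ i, d i ≠ 0) (hdc : ∀ i, d i ≤ c i) :
    ∀ {i : ℕ} {ν : Ordinal.{u}}, ν < ordProd d i → digitEmb c d i ν < ordProd c i
  | 0, _, hν => hν.trans_le (hdc 0)
  | i + 1, ν, hν => lt_mul_iff.2 ⟨ν / ordProd d i,
      ((lt_mul_iff_div_lt (ordProd_ne_zero hd i)).1 hν).trans_le (hdc (i + 1)),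
      _, digitEmb_lt hd hdc (mod_lt ν (ordProd_ne_zero hd i)), rfl⟩

theorem digitEmb_strictMonoOn (hd : ∀ i, d i ≠ 0) (hdc : ∀ i, d i ≤ c i) :
    ∀ i, StrictMonoOn (digitEmb c d i) (Iio (ordProd d i))
  | 0 => fun _ _ _ _ h => h
  | i + 1 => by
    intro ν' _ ν _ h
    have hD := ordProd_ne_zero hd i
    rw [← div_add_mod ν' (ordProd d i), ← div_add_mod ν (ordProd d i),
      mul_add_lt_mul_add_iff (mod_lt ν hD) (mod_lt ν' hD)] at h
    change ordProd c i * (ν' / ordProd d i) + digitEmb c d i (ν' % ordProd d i) <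
      ordProd c i * (ν / ordProd d i) + digitEmb c d i (ν % ordProd d i)
    rw [mul_add_lt_mul_add_iff (digitEmb_lt hd hdc (mod_lt ν hD))
      (digitEmb_lt hd hdc (mod_lt ν' hD))]
    exact h.imp_right (And.imp_right (digitEmb_strictMonoOn hd hdc i (mod_lt ν' hD) (mod_lt ν hD)))

theorem digitEmb_div_eq_iff (hd : ∀ i, d i ≠ 0) (hdc : ∀ i, d i ≤ c i) (m : ℕ) :
    ∀ {i : ℕ} {ν ν' : Ordinal.{u}}, ν < ordProd d i → ν' < ordProd d i →
      (digitEmb c d i ν / ordProd c m = digitEmb c d i ν' / ordProd c m ↔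
        ν / ordProd d m = ν' / ordProd d m)
  | i, ν, ν', hν, hν' => by
    have hc : ∀ i, c i ≠ 0 := fun i => ((hd i).bot_lt.trans_le (hdc i)).ne'
    rcases le_or_gt i m with him | hmi
    · have hCle := le_of_dvd (ordProd_ne_zero hc m) (ordProd_dvd_ordProd (c := c) him)
      have hDle := le_of_dvd (ordProd_ne_zero hd m) (ordProd_dvd_ordProd (c := d) him)
      rw [div_eq_zero_of_lt ((digitEmb_lt hd hdc hν).trans_le hCle),
        div_eq_zero_of_lt ((digitEmb_lt hd hdc hν').trans_le hCle),
        div_eq_zero_of_lt (hν.trans_le hDle), div_eq_zero_of_lt (hν'.trans_le hDle)]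
    obtain ⟨n, rfl⟩ : ∃ n, i = n + 1 := Nat.exists_eq_add_one.2 (m.zero_le.trans_lt hmi)
    obtain ⟨ρ, hρ⟩ := ordProd_dvd_ordProd (c := c) (Nat.lt_add_one_iff.1 hmi)
    obtain ⟨σ, hσ⟩ := ordProd_dvd_ordProd (c := d) (Nat.lt_add_one_iff.1 hmi)
    have hD := ordProd_ne_zero hd n
    have div_mul_add : ∀ {b ρ q x : Ordinal.{u}}, b ≠ 0 → (b * ρ * q + x) / b = ρ * q + x / b :=
      fun hb => by rw [mul_assoc, mul_add_div _ hb]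
    have hemb : ∀ ν, digitEmb c d (n + 1) ν / ordProd c m =
        ρ * (ν / ordProd d n) + digitEmb c d n (ν % ordProd d n) / ordProd c m := fun ν => by
      rw [digitEmb, hρ, div_mul_add (ordProd_ne_zero hc m)]
    have hdig : ∀ ν, ν / ordProd d m = σ * (ν / ordProd d n) + ν % ordProd d n / ordProd d m :=
      fun ν => by
        have := div_mul_add (ρ := σ) (q := ν / ordProd d n) (x := ν % ordProd d n)
          (ordProd_ne_zero hd m)
        rwa [← hσ, div_add_mod] at this
    have hemb_lt : ∀ ν, digitEmb c d n (ν % ordProd d n) / ordProd c m < ρ := fun ν =>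
      (lt_mul_iff_div_lt (ordProd_ne_zero hc m)).1 (hρ ▸ digitEmb_lt hd hdc (mod_lt ν hD))
    have hdig_lt : ∀ ν, ν % ordProd d n / ordProd d m < σ := fun ν =>
      (lt_mul_iff_div_lt (ordProd_ne_zero hd m)).1 (hσ ▸ mod_lt ν hD)
    rw [hemb, hemb, hdig ν, hdig ν', mul_add_eq_mul_add_iff (hemb_lt ν) (hemb_lt ν'),
      mul_add_eq_mul_add_iff (hdig_lt ν) (hdig_lt ν'),
      digitEmb_div_eq_iff hd hdc m (mod_lt ν hD) (mod_lt ν' hD)]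

theorem factor_sInf_div_eq_ne_one {l : ℕ} {μ ν : Ordinal.{u}} (hμν : μ ≠ ν)
    (hμ : μ < ordProd d l) (hν : ν < ordProd d l) :
    d (sInf {i | μ / ordProd d i = ν / ordProd d i}) ≠ 1 := by
  set S := {i | μ / ordProd d i = ν / ordProd d i}
  have hl : l ∈ S := by simp [S, div_eq_zero_of_lt hμ, div_eq_zero_of_lt hν]
  have hm : sInf S ∈ S := Nat.sInf_mem ⟨l, hl⟩
  intro h1
  rcases hm0 : sInf S with _ | n
  · rw [hm0] at hm h1
    exact hμν (by simpa [S, ordProd, h1] using hm)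
  · rw [hm0] at hm h1
    have hn : n ∈ S := by simpa [S, ordProd, h1] using hm
    exact absurd (Nat.sInf_le hn) (by omega)

end DigitEmbedding

section Separation

theorem alpProd_eq_ordProd (ε : ℕ → Ordinal.{u}) :
    alpProd ε = ordProd fun i => ω ^ ω ^ ε i := by
  funext i
  induction i with
  | zero => rfl
  | succ i ih => rw [alpProd, ordProd, ih]

theorem indProd_eq_ordProd (ε : ℕ → Ordinal.{u}) (A : Set ℕ) :
    indProd ε A = ordProd fun i => ω ^ (ω ^ ε i * A.indicator (fun _ => 1) i) := by
  funext i
  induction i with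
  | zero => rfl
  | succ i ih => rw [indProd, ordProd, ih]

variable {α : Type u} [PartialOrder α] {Q : Set α} {s t : α}

theorem sep_eq_sInf_div (hwf : IsWFTree Q) (hs : s ∈ Q) (ht : t ∈ Q) (ε : ℕ → Ordinal.{u}) :
    sep Q ε s t = sInf {i | treeTau Q s / alpProd ε i = treeTau Q t / alpProd ε i} := by
  have hα : ∀ i, alpProd ε i ≠ 0 := by
    rw [alpProd_eq_ordProd]
    exact ordProd_ne_zero fun _ => opow_ne_zero _ omega0_ne_zero
  unfold sep
  congr 1
  ext i
  simp only [mem_block_iff hwf hs (hα i), mem_block_iff hwf ht (hα i), mem_ofPred_eq]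
  exact ⟨fun ⟨_, h1, h2⟩ => h1.trans h2.symm, fun h => ⟨_, h, rfl⟩⟩

end Separation

theorem statement1_general {α : Type u} [PartialOrder α] (P : Set α)
    (k l : ℕ) (ε : ℕ → Ordinal.{u})
    (hrank : treeRank P = alpProd ε l) (f : α → α → Fin (k + 1))
    (Q : Set α) (hQP : Q ⊆ P) (F : Fin (l + 1) → Fin (k + 1))
    (hQrank : treeRank Q = treeRank P)
    (hQ : ∀ s ∈ Q, ∀ t ∈ Q, s < t →
      sep Q ε s t = sep P ε s t ∧
      ∃ h : sep Q ε s t < l + 1, F ⟨sep Q ε s t, h⟩ = f s t)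
    (j : Fin (k + 1)) :
    ∃ R ⊆ P, treeRank R = indProd ε {i : ℕ | ∃ h : i < l + 1, F ⟨i, h⟩ = j} l ∧
      ∀ s ∈ R, ∀ t ∈ R, s < t → f s t = j := by
  set A : Set ℕ := {i : ℕ | ∃ h : i < l + 1, F ⟨i, h⟩ = j}
  set c : ℕ → Ordinal.{u} := fun i => ω ^ ω ^ ε i
  set d : ℕ → Ordinal.{u} := fun i => ω ^ (ω ^ ε i * A.indicator (fun _ => 1) i)
  have hd : ∀ i, d i ≠ 0 := fun i => opow_ne_zero _ omega0_ne_zero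
  have hdc : ∀ i, d i ≤ c i := fun i => by
    by_cases hi : i ∈ A <;> simp [c, d, hi, one_le_iff_ne_zero]
  have hαc : alpProd ε = ordProd c := alpProd_eq_ordProd ε
  have hQrank' : treeRank Q = ordProd c l := by rw [hQrank, hrank, hαc]
  have hwf : IsWFTree Q := isWFTree_of_treeRank_ne_zero <|
    hQrank' ▸ ordProd_ne_zero (fun _ => opow_ne_zero _ omega0_ne_zero) l
  have hemb := digitEmb_strictMonoOn hd hdc l
  refine ⟨levelSubtree Q (digitEmb c d l) (ordProd d l), fun t ht => hQP ht.1, ?_, ?_⟩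
  · rw [indProd_eq_ordProd]
    exact treeRank_levelSubtree hwf hemb fun μ hμ => hQrank' ▸ digitEmb_lt hd hdc hμ
  · rintro s ⟨hsQ, μ, hμ, hsμ⟩ t ⟨htQ, ν, hν, htν⟩ hst
    have hνμ : ν < μ :=
      (hemb.lt_iff_lt hν hμ).1 (htν ▸ hsμ ▸ treeTau_lt_treeTau hwf hsQ htQ hst)
    have hsep : sep Q ε s t = sInf {i | μ / ordProd d i = ν / ordProd d i} := by
      rw [sep_eq_sInf_div hwf hsQ htQ, hαc, hsμ, htν]
      simp_rw [digitEmb_div_eq_iff hd hdc _ hμ hν]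
    have hA : sep Q ε s t ∈ A := by
      by_contra hnA
      exact hsep ▸ factor_sInf_div_eq_ne_one hνμ.ne' hμ hν <| by simp [d, hnA]
    obtain ⟨-, _, hF⟩ := hQ s hsQ t htQ hst
    exact hF.symm.trans hA.2

/-- Sharpness, part (i): with `Q` and `F` as in the main theorem,
for each color `j` there is a subtree `R` of `P` of rank
`ω^{ω^{ε_0}·1_A(0)}⋯ω^{ω^{ε_l}·1_A(l)}` (where `A = {i ≤ l : F(i) = j}`) on which
all pairs receive color `j`. -/
theorem statement1 {α : Type u} [PartialOrder α] (P : Set α) (hP : IsTree P)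
    (hWF : IsWFTree P) (k l : ℕ) (ε : ℕ → Ordinal.{u}) (hε : ∀ i < l, ε (i + 1) ≤ ε i)
    (hrank : treeRank P = alpProd ε l) (f : α → α → Fin (k + 1))
    (Q : Set α) (hQP : Q ⊆ P) (F : Fin (l + 1) → Fin (k + 1))
    (hQrank : treeRank Q = treeRank P)
    (hQ : ∀ s ∈ Q, ∀ t ∈ Q, s < t →
      sep Q ε s t = sep P ε s t ∧
      ∃ h : sep Q ε s t < l + 1, F ⟨sep Q ε s t, h⟩ = f s t)
    (j : Fin (k + 1)) :
    ∃ R ⊆ P, treeRank R = indProd ε {i : ℕ | ∃ h : i < l + 1, F ⟨i, h⟩ = j} l ∧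
      ∀ s ∈ R, ∀ t ∈ R, s < t → f s t = j :=
  statement1_general P k l ε hrank f Q hQP F hQrank hQ j
end

section
/- Let k, l < ω, let F : {0,…,l} → {0,…,k} be a function, fix ordinals ε_0 ≥ … ≥ ε_l, set γ_0 = 0 and γ_{i+1} = γ_i + ω^{ε_i}, and let P be a tree with rank(P) = ω^{ε_0} + … + ω^{ε_l}. Define f : P → {0,…,k} by f(t) = F(i) for t ∈ P^{γ_i} \ P^{γ_{i+1}}. Then for every j ≤ k, writing A = {i ≤ l : F(i) = j} = {a(0) < … < a(p)} and α = ω^{ε_{a(0)}} + … + ω^{ε_{a(p)}} (with α = 0 if A = ∅), every subtree Q of P on which f is identically j satisfies rank(Q) ≤ α. -/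
open Ordinal Set

universe u

/-!
Each level `P^{γ_i} \ P^{γ_{i+1}}` has colour `F(i)`, so a `j`-coloured subtree `Q` meets only the
levels with `i ∈ A`. By induction on `i`, `Q^{β_i} ⊆ P^{γ_i}` where `β_i = Σ_{n < i, n ∈ A} ω^{ε_n}`:
for `i ∈ A` take `ω^{ε_i}` further derivatives on both sides, and for `i ∉ A` the inclusion
`Q^{β_i} ⊆ P^{γ_i}` already lands in `P^{γ_{i+1}}` since `Q` avoids level `i`.
At `i = l + 1` the right-hand side is `P^{rank P} = ∅`.
-/

namespace TreeRank

variable {α : Type u} [PartialOrder α]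

lemma derivIter_zero (P : Set α) : derivIter P 0 = P :=
  limitRecOn_zero _ _ _

lemma derivIter_succ (P : Set α) (ξ : Ordinal.{u}) :
    derivIter P (ξ + 1) = treeDeriv (derivIter P ξ) := by
  rw [derivIter, limitRecOn_add_one]
  rfl

lemma derivIter_limit (P : Set α) {o : Ordinal.{u}} (ho : Order.IsSuccLimit o) :
    derivIter P o = ⋂ ζ : Iio o, derivIter P ζ.1 :=
  limitRecOn_limit _ _ _ _ ho

lemma treeDeriv_mono {P Q : Set α} (h : Q ⊆ P) : treeDeriv Q ⊆ treeDeriv P := by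
  rintro t ⟨htQ, hnotLeaf⟩
  obtain ⟨s, hsQ, hts⟩ : ∃ s ∈ Q, t < s := by
    by_contra! hc
    exact hnotLeaf ⟨htQ, hc⟩
  exact ⟨h htQ, fun hleaf => hleaf.2 s (h hsQ) hts⟩

lemma derivIter_mono {P Q : Set α} (h : Q ⊆ P) (ξ : Ordinal.{u}) :
    derivIter Q ξ ⊆ derivIter P ξ := by
  induction ξ using limitRecOn with
  | zero => simpa only [derivIter_zero] using h
  | add_one ξ ih => simpa only [derivIter_succ] using treeDeriv_mono ih
  | limit o ho ih =>
    rw [derivIter_limit Q ho, derivIter_limit P ho]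
    exact iInter_mono fun ζ => ih ζ.1 ζ.2

lemma derivIter_anti (P : Set α) : Antitone (derivIter P) := by
  intro a b hab
  induction b using limitRecOn with
  | zero => rw [nonpos_iff_eq_zero.mp hab]
  | add_one b ih =>
    rcases hab.eq_or_lt with rfl | hlt
    · exact subset_rfl
    · rw [derivIter_succ]
      exact sdiff_subset.trans (ih (Order.lt_add_one_iff.mp hlt))
  | limit o ho _ =>
    rcases hab.eq_or_lt with rfl | hlt
    · exact subset_rfl
    · rw [derivIter_limit P ho]
      exact iInter_subset (fun ζ : Iio o => derivIter P ζ.1) ⟨a, hlt⟩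

lemma derivIter_subset (P : Set α) (ξ : Ordinal.{u}) : derivIter P ξ ⊆ P :=
  (derivIter_anti P (zero_le : 0 ≤ ξ)).trans (derivIter_zero P).subset

lemma derivIter_add (P : Set α) (a c : Ordinal.{u}) :
    derivIter P (a + c) = derivIter (derivIter P a) c := by
  induction c using limitRecOn with
  | zero => rw [add_zero, derivIter_zero]
  | add_one c ih => rw [← add_assoc, derivIter_succ, derivIter_succ, ih]
  | limit o ho ih =>
    rw [derivIter_limit _ ho, derivIter_limit P (isSuccLimit_add a ho)]
    ext t
    simp only [mem_iInter, Subtype.forall, mem_Iio]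
    constructor
    · intro H ξ hξ
      rw [← ih ξ hξ]
      exact H (a + ξ) (add_lt_add_right hξ a)
    · intro H ζ hζ
      obtain ⟨ξ, hξ, hle⟩ := (lt_add_iff ho.ne_bot).mp hζ
      exact derivIter_anti P hle (ih ξ hξ ▸ H ξ hξ)

lemma derivIter_treeRank_eq_empty {P : Set α} (hWF : IsWFTree P) :
    derivIter P (treeRank P) = ∅ :=
  csInf_mem hWF

lemma treeRank_le_of_derivIter_eq_empty {P : Set α} {ξ : Ordinal.{u}}
    (h : derivIter P ξ = ∅) : treeRank P ≤ ξ :=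
  csInf_le' h

lemma derivIter_indSum_subset_derivIter_sumPow {P Q : Set α} (hQP : Q ⊆ P)
    (ε : ℕ → Ordinal.{u}) (A : Set ℕ) (n : ℕ)
    (hQA : ∀ i < n, i ∉ A → ∀ t ∈ Q,
      t ∈ derivIter P (sumPow ε i) → t ∈ derivIter P (sumPow ε (i + 1))) :
    derivIter Q (indSum ε A n) ⊆ derivIter P (sumPow ε n) := by
  induction n with
  | zero => simpa only [indSum, sumPow, derivIter_zero] using hQP
  | succ i ih =>
    have hprev := ih fun n hn => hQA n (hn.trans i.lt_succ_self)
    by_cases hiA : i ∈ A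
    · rw [indSum, sumPow, indicator_of_mem hiA, one_mul, derivIter_add, derivIter_add]
      exact derivIter_mono hprev _
    · rw [indSum, indicator_of_notMem hiA, zero_mul, add_zero]
      exact fun t ht =>
        hQA i i.lt_succ_self hiA t (derivIter_subset Q _ ht) (hprev ht)

end TreeRank

open TreeRank in
theorem statement7_general {α : Type u} [PartialOrder α] (l k : ℕ)
    (F : Fin (l + 1) → Fin (k + 1)) (ε : ℕ → Ordinal.{u})
    (P : Set α) (hWF : IsWFTree P)
    (hrank : treeRank P = sumPow ε (l + 1)) (f : α → Fin (k + 1))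
    (hf : ∀ (i : ℕ) (hi : i ≤ l),
      ∀ t ∈ derivIter P (sumPow ε i) \ derivIter P (sumPow ε (i + 1)),
        f t = F ⟨i, Nat.lt_succ_of_le hi⟩)
    (j : Fin (k + 1)) (Q : Set α) (hQP : Q ⊆ P) (hconst : ∀ t ∈ Q, f t = j) :
    treeRank Q ≤ indSum ε {i : ℕ | ∃ h : i < l + 1, F ⟨i, h⟩ = j} (l + 1) := by
  have hPempty : derivIter P (sumPow ε (l + 1)) = ∅ :=
    hrank ▸ derivIter_treeRank_eq_empty hWF
  have hQsub := derivIter_indSum_subset_derivIter_sumPow hQP ε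
    {i : ℕ | ∃ h : i < l + 1, F ⟨i, h⟩ = j} (l + 1) fun i hi hiA t htQ htP => by
      by_contra htP'
      exact hiA ⟨hi, (hf i (Nat.lt_succ_iff.mp hi) t ⟨htP, htP'⟩).symm.trans (hconst t htQ)⟩
  exact treeRank_le_of_derivIter_eq_empty (subset_empty_iff.mp (hPempty ▸ hQsub))

/-- if `f : P → {0,…,k}` is constantly `F(i)` on the level
`P^{γ_i} \ P^{γ_{i+1}}` for each `i ≤ l`, then for every color `j`, any subtree `Q`
of `P` on which `f` is identically `j` has rank at most `Σ_{i ∈ A} ω^{ε_i}`,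
where `A = {i ≤ l : F(i) = j}` (the bound is `0` when `A = ∅`). -/
theorem statement7 {α : Type u} [PartialOrder α] (l k : ℕ)
    (F : Fin (l + 1) → Fin (k + 1)) (ε : ℕ → Ordinal.{u})
    (hε : ∀ i < l, ε (i + 1) ≤ ε i) (P : Set α) (hP : IsTree P) (hWF : IsWFTree P)
    (hrank : treeRank P = sumPow ε (l + 1)) (f : α → Fin (k + 1))
    (hf : ∀ (i : ℕ) (hi : i ≤ l),
      ∀ t ∈ derivIter P (sumPow ε i) \ derivIter P (sumPow ε (i + 1)),
        f t = F ⟨i, Nat.lt_succ_of_le hi⟩)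
    (j : Fin (k + 1)) (Q : Set α) (hQP : Q ⊆ P) (hconst : ∀ t ∈ Q, f t = j) :
    treeRank Q ≤ indSum ε {i : ℕ | ∃ h : i < l + 1, F ⟨i, h⟩ = j} (l + 1) :=
  statement7_general l k F ε P hWF hrank f hf j Q hQP hconst
end
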